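/- In the random-connectivity shard graph where each node gets d random outbound edges and all n shards are disjoint of equal size |S₁|, with d² ≤ C·n^{1/2}, the expected retraining cost upon forgetting a sample x ∈ S₁ satisfies E|M_x| = O(|S₁|·d²); specifically E|M_x| ≤ |S₁|(d+1)². -/

import Mathlib

/-!
Bound `|M_x|` pointwise by a union bound: each in-neighbour `j` of the shard contributes at most
the `d + 1` shards it points to, so `|M_x| ≤ |N_in| (d + 1) s`. It remains to see that the
expected in-degree is at most `d + 1`: the self-loop contributes `1`, and each of the other
`n - 1` nodes points to the shard with probability `d / (n - 1)`, because its `d` targets form a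
uniform `d`-subset of the other `n - 1` nodes.
-/

open Finset Fintype

lemma Finset.card_filter_mem_powersetCard_mul {β : Type*} [DecidableEq β] {U : Finset β} {a : β}
    (ha : a ∈ U) (k : ℕ) :
    #{A ∈ U.powersetCard k | a ∈ A} * #U = k * #(U.powersetCard k) := by
  rcases k with _ | k
  · simp
  obtain ⟨m, hm⟩ := Nat.exists_eq_add_one_of_ne_zero (card_ne_zero_of_mem ha)
  have hfilter : #{A ∈ U.powersetCard (k + 1) | a ∈ A} = m.choose k := by
    simpa [hm] using card_filter_powersetCard_subset {a} U (k + 1) (by simpa) (by simp)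
  rw [hfilter, card_powersetCard, hm, mul_comm, Nat.add_one_mul_choose_eq, mul_comm]

lemma Fintype.card_filter_piFinset_apply {ι : Type*} [Fintype ι] [DecidableEq ι]
    {δ : ι → Type*} [∀ i, DecidableEq (δ i)] (s : ∀ i, Finset (δ i)) (j : ι)
    (P : δ j → Prop) [DecidablePred P] :
    #{f ∈ piFinset s | P (f j)} = #{x ∈ s j | P x} * ∏ i ∈ univ.erase j, #(s i) := by
  have hfilter : {f ∈ piFinset s | P (f j)} = {f ∈ piFinset s | f j ∈ {x ∈ s j | P x}} :=
    filter_congr fun f hf => by simp [mem_piFinset.1 hf j]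
  rw [hfilter, ← piFinset_update_eq_filter_piFinset_mem s j (filter_subset P (s j)),
    card_piFinset, ← mul_prod_erase univ _ (mem_univ j), Function.update_self]
  congr 1
  exact Finset.prod_congr rfl fun i hi => by rw [Function.update_of_ne (ne_of_mem_erase hi)]

namespace ShardGraph

/-! In the paper's notation, `outNbhd E j = N_out(j)` (including the self-loop),
`inNbhd E i = N_in(S_i)` and `retrainingSet E S i x = M_x`. -/

variable {ι α : Type*} [Fintype ι] [DecidableEq ι] [DecidableEq α]

/-- The sample space of the random graph, carrying the uniform distribution. -/
def edgeChoices (ι : Type*) [Fintype ι] [DecidableEq ι] (d : ℕ) : Finset (ι → Finset ι) :=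
  piFinset fun i => (univ.erase i).powersetCard d

def outNbhd (E : ι → Finset ι) (j : ι) : Finset ι := insert j (E j)

def inNbhd (E : ι → Finset ι) (i : ι) : Finset ι := {j | i ∈ outNbhd E j}

def retrainingSet (E : ι → Finset ι) (S : ι → Finset α) (i : ι) (x : α) : Finset α :=
  ((inNbhd E i).biUnion fun j => (outNbhd E j).biUnion S).erase x

variable {d : ℕ}

lemma mem_edgeChoices {E : ι → Finset ι} :
    E ∈ edgeChoices ι d ↔ ∀ i, #(E i) = d ∧ i ∉ E i := by
  simp [edgeChoices, mem_powersetCard, subset_erase, and_comm]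

lemma card_filter_mem_apply_mul {i j : ι} (hij : i ≠ j) :
    #{E ∈ edgeChoices ι d | i ∈ E j} * (card ι - 1) = d * #(edgeChoices ι d) := by
  have hU : #(univ.erase j) = card ι - 1 := by rw [card_erase_of_mem (mem_univ j), card_univ]
  rw [edgeChoices, card_filter_piFinset_apply _ j (i ∈ ·), card_piFinset,
    ← mul_prod_erase univ _ (mem_univ j), ← hU, mul_right_comm,
    card_filter_mem_powersetCard_mul (mem_erase.2 ⟨hij, mem_univ i⟩), mul_assoc]

lemma sum_erase_card_filter_mem_apply_le (i : ι) :
    ∑ j ∈ univ.erase i, #{E ∈ edgeChoices ι d | i ∈ E j} ≤ d * #(edgeChoices ι d) := by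
  have hcard : #(univ.erase i) = card ι - 1 := by rw [card_erase_of_mem (mem_univ i), card_univ]
  rcases (univ.erase i).eq_empty_or_nonempty with h | h
  · simp [h]
  refine Nat.le_of_mul_le_mul_right (le_of_eq ?_) (hcard ▸ h.card_pos)
  rw [sum_mul, Finset.sum_congr rfl fun j hj => card_filter_mem_apply_mul (ne_of_mem_erase hj).symm,
    sum_const, hcard, smul_eq_mul, mul_comm]

lemma sum_card_inNbhd_le (i : ι) :
    ∑ E ∈ edgeChoices ι d, #(inNbhd E i) ≤ (d + 1) * #(edgeChoices ι d) := by
  have hswap : ∑ E ∈ edgeChoices ι d, #(inNbhd E i)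
      = ∑ j, #{E ∈ edgeChoices ι d | i ∈ outNbhd E j} := by
    simp only [inNbhd, card_filter]
    exact sum_comm
  have hself : #{E ∈ edgeChoices ι d | i ∈ outNbhd E i} = #(edgeChoices ι d) := by
    rw [filter_true_of_mem fun E _ => mem_insert_self i (E i)]
  have hothers : ∀ j ∈ univ.erase i,
      #{E ∈ edgeChoices ι d | i ∈ outNbhd E j} = #{E ∈ edgeChoices ι d | i ∈ E j} := by
    intro j hj
    simp only [outNbhd, mem_insert, (ne_of_mem_erase hj).symm, false_or]
  rw [hswap, ← add_sum_erase univ _ (mem_univ i), hself, Finset.sum_congr rfl hothers, add_mul,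
    one_mul, add_comm]
  exact Nat.add_le_add_right (sum_erase_card_filter_mem_apply_le i) _

lemma card_retrainingSet_le {s : ℕ} {E : ι → Finset ι} (hE : ∀ j, #(E j) ≤ d)
    {S : ι → Finset α} (hS : ∀ j, #(S j) ≤ s) (i : ι) (x : α) :
    #(retrainingSet E S i x) ≤ #(inNbhd E i) * ((d + 1) * s) := by
  refine card_erase_le.trans (card_biUnion_le_card_mul _ _ _ fun j _ => ?_)
  calc #((outNbhd E j).biUnion S)
      _ ≤ #(outNbhd E j) * s := card_biUnion_le_card_mul _ _ _ fun v _ => hS v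
      _ ≤ (d + 1) * s :=
        Nat.mul_le_mul_right s ((card_insert_le j (E j)).trans (Nat.add_le_add_right (hE j) 1))

lemma sum_card_retrainingSet_le {s : ℕ} {S : ι → Finset α} (hS : ∀ j, #(S j) ≤ s) (i : ι)
    (x : α) :
    ∑ E ∈ edgeChoices ι d, #(retrainingSet E S i x) ≤ s * (d + 1) ^ 2 * #(edgeChoices ι d) :=
  calc ∑ E ∈ edgeChoices ι d, #(retrainingSet E S i x)
      ≤ ∑ E ∈ edgeChoices ι d, #(inNbhd E i) * ((d + 1) * s) :=
        sum_le_sum fun E hE =>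
          card_retrainingSet_le (fun j => (mem_edgeChoices.1 hE j).1.le) hS i x
    _ ≤ (d + 1) * #(edgeChoices ι d) * ((d + 1) * s) := by
        rw [← sum_mul]
        exact Nat.mul_le_mul_right _ (sum_card_inNbhd_le i)
    _ = s * (d + 1) ^ 2 * #(edgeChoices ι d) := by ring

end ShardGraph

theorem stmt2_general {α : Type*} [DecidableEq α] (n d s : ℕ)
    (S : Fin n → Finset α)
    (hcard : ∀ i, (S i).card = s)
    (i₀ : Fin n) (x : α) :
    (∑ ω : {E : Fin n → Finset (Fin n) // ∀ i, (E i).card = d ∧ i ∉ E i},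
        ((((Finset.univ.filter fun j => i₀ ∈ insert j (ω.1 j)).biUnion fun j =>
            (insert j (ω.1 j)).biUnion S).erase x).card : ℝ)) /
      (Fintype.card {E : Fin n → Finset (Fin n) // ∀ i, (E i).card = d ∧ i ∉ E i}) ≤
      (s : ℝ) * ((d : ℝ) + 1) ^ 2 := by
  change (∑ ω : {E : Fin n → Finset (Fin n) // ∀ i, (E i).card = d ∧ i ∉ E i},
      (#(ShardGraph.retrainingSet ω.1 S i₀ x) : ℝ)) / _ ≤ _
  rw [← sum_subtype (ShardGraph.edgeChoices (Fin n) d) (fun _ => ShardGraph.mem_edgeChoices)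
      (fun E => (#(ShardGraph.retrainingSet E S i₀ x) : ℝ)),
    card_of_subtype (ShardGraph.edgeChoices (Fin n) d) fun _ => ShardGraph.mem_edgeChoices]
  refine div_le_of_le_mul₀ (Nat.cast_nonneg _) (by positivity) ?_
  exact_mod_cast ShardGraph.sum_card_retrainingSet_le (fun j => (hcard j).le) i₀ x

/-- Upper bound on the expected retraining cost in the random-connectivity shard graph:
each node independently chooses `d` outbound edges uniformly among the other nodes (plus
its self-loop); shards are pairwise disjoint of equal size `s`.  The expected size of
`M_x = ⋃_{j ∈ N_in(i₀)} ⋃_{v ∈ N_out(j)} v \ {x}` (uniform average over all admissible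
edge assignments) is at most `s * (d+1)^2 = O(s d²)`. -/
theorem stmt2 {α : Type*} [DecidableEq α] (n d s : ℕ) (hn : 0 < n) (hd : d ≤ n - 1)
    (C : ℝ) (hC : 0 < C) (hCd : (d : ℝ) ^ 2 ≤ C * (n : ℝ) ^ ((1 : ℝ) / 2))
    (S : Fin n → Finset α)
    (hdisj : ∀ i j : Fin n, i ≠ j → Disjoint (S i) (S j))
    (hcard : ∀ i, (S i).card = s)
    (i₀ : Fin n) (x : α) (hx : x ∈ S i₀) :
    (∑ ω : {E : Fin n → Finset (Fin n) // ∀ i, (E i).card = d ∧ i ∉ E i},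
        ((((Finset.univ.filter fun j => i₀ ∈ insert j (ω.1 j)).biUnion fun j =>
            (insert j (ω.1 j)).biUnion S).erase x).card : ℝ)) /
      (Fintype.card {E : Fin n → Finset (Fin n) // ∀ i, (E i).card = d ∧ i ∉ E i}) ≤
      (s : ℝ) * ((d : ℝ) + 1) ^ 2 :=
  stmt2_general n d s S hcard i₀ x
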